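/- Consider the SIS model under multi-layer Markovian mobility, with F* = F(v) and L* = L(v). If μ(B F* − D − L*) ≤ 0, where μ(G) is the largest real part of an eigenvalue of G, then there exists some patch i ∈ {1,…,n} such that δ_i ≥ β_i. -/

import Mathlib

open Matrix Finset Filter

namespace SISMobility

/-- Index type for (class, patch) pairs: `(α, i)` with `α ∈ {1,…,m}` a class and
`i ∈ {1,…,n}` a patch. -/
abbrev Idx (n m : ℕ) := Fin m × Fin n

/-- A CTMC generator matrix: nonnegative off-diagonal entries and zero row sums
(so that the diagonal entry is minus the total outgoing rate). -/
def IsGenerator {n : ℕ} (Q : Matrix (Fin n) (Fin n) ℝ) : Prop :=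
  (∀ i j, i ≠ j → 0 ≤ Q i j) ∧ ∀ i, ∑ j, Q i j = 0

/-- Strong connectivity of the digraph on `{1,…,n}` with an edge `(i,j)` whenever
`i ≠ j` and `Q i j > 0`. -/
def StronglyConnected {n : ℕ} (Q : Matrix (Fin n) (Fin n) ℝ) : Prop :=
  ∀ i j : Fin n, Relation.ReflTransGen (fun a b => a ≠ b ∧ 0 < Q a b) i j

/-- The `nm × nm` block-diagonal infection-rate matrix `B` (m copies of `diag β`). -/
noncomputable def Bmat (n m : ℕ) (β : Fin n → ℝ) : Matrix (Idx n m) (Idx n m) ℝ :=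
  Matrix.diagonal fun k => β k.2

/-- The `nm × nm` block-diagonal recovery-rate matrix `D` (m copies of `diag δ`). -/
noncomputable def Dmat (n m : ℕ) (δ : Fin n → ℝ) : Matrix (Idx n m) (Idx n m) ℝ :=
  Matrix.diagonal fun k => δ k.2

/-- The block-diagonal mobility matrix `L(x)`: the `α`-block has entries
`l^α_{ii} = ∑_{j≠i} q^α_{ji} x^α_j / x^α_i` and `l^α_{ij} = -q^α_{ji} x^α_j / x^α_i`. -/
noncomputable def Lmat {n m : ℕ} (Q : Fin m → Matrix (Fin n) (Fin n) ℝ)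
    (x : Idx n m → ℝ) : Matrix (Idx n m) (Idx n m) ℝ :=
  fun k l =>
    if k.1 = l.1 then
      if k.2 = l.2 then ∑ j ∈ Finset.univ.filter (· ≠ k.2), Q k.1 j k.2 * x (k.1, j) / x k
      else -(Q k.1 l.2 k.2 * x (k.1, l.2) / x k)
    else 0

/-- The population-fraction matrix `F(x)`: entry `((α,i),(γ,j))` equals
`x^γ_i / ∑_η x^η_i` if `j = i` and `0` otherwise. -/
noncomputable def Fmat {n m : ℕ} (x : Idx n m → ℝ) : Matrix (Idx n m) (Idx n m) ℝ :=
  fun k l => if l.2 = k.2 then x (l.1, k.2) / ∑ η : Fin m, x (η, k.2) else 0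

/-- Right-hand side of the infection dynamics
`ṗ = (B F(x) − D − L(x)) p − diag(p) B F(x) p`. -/
noncomputable def pRHS {n m : ℕ} (β δ : Fin n → ℝ) (Q : Fin m → Matrix (Fin n) (Fin n) ℝ)
    (x p : Idx n m → ℝ) : Idx n m → ℝ :=
  (Bmat n m β * Fmat x - Dmat n m δ - Lmat Q x).mulVec p -
    (Matrix.diagonal p * (Bmat n m β * Fmat x)).mulVec p

/-- Right-hand side of the mobility dynamics `ẋ^α = (Q^α)ᵀ x^α`. -/
noncomputable def xRHS {n m : ℕ} (Q : Fin m → Matrix (Fin n) (Fin n) ℝ)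
    (x : Idx n m → ℝ) : Idx n m → ℝ :=
  fun k => ∑ j, Q k.1 j k.2 * x (k.1, j)

/-- `(p, x)` is a solution of the SIS model under multi-layer Markovian mobility. -/
def IsSolution {n m : ℕ} (β δ : Fin n → ℝ) (Q : Fin m → Matrix (Fin n) (Fin n) ℝ)
    (p x : ℝ → Idx n m → ℝ) : Prop :=
  ∀ t : ℝ, 0 ≤ t → ∀ k : Idx n m,
    HasDerivAt (fun s => p s k) (pRHS β δ Q (x t) (p t) k) t ∧
    HasDerivAt (fun s => x s k) (xRHS Q (x t) k) t

/-- The radial abscissa `μ(G)`: the largest real part of a (complex) eigenvalue of a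
real matrix `G`. -/
noncomputable def muMax {ι : Type*} [Fintype ι] [DecidableEq ι] (G : Matrix ι ι ℝ) : ℝ :=
  sSup (Complex.re '' spectrum ℂ (G.map (algebraMap ℝ ℂ)))

/-- The spectral radius `ρ(G)` of a real matrix `G`. -/
noncomputable def specRad {ι : Type*} [Fintype ι] [DecidableEq ι] (G : Matrix ι ι ℝ) : ℝ :=
  sSup ((fun z : ℂ => ‖z‖) '' spectrum ℂ (G.map (algebraMap ℝ ℂ)))

/-- The fixed-point map `H(p) = (I + A(diag p + (I − diag p) M))⁻¹ A p`. -/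
noncomputable def Hfun {n m : ℕ} (A M : Matrix (Idx n m) (Idx n m) ℝ)
    (p : Idx n m → ℝ) : Idx n m → ℝ :=
  ((1 + A * (Matrix.diagonal p + (1 - Matrix.diagonal p) * M))⁻¹).mulVec (A.mulVec p)

end SISMobility

open SISMobility

/-!
Suppose `β_i > δ_i` in every patch and put `s = min_i (β_i - δ_i) > 0`. The mobility matrix
annihilates the stationary distribution from the left, `vᵀ L(v) = 0`, and `vᵀ B F(v) = (β v)ᵀ`,
so the Metzler matrix `G = B F* − D − L*` satisfies `vᵀ G ≥ s vᵀ` with `v > 0`. For `c ≥ 0`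
large enough, `P = G + c I` is entrywise nonnegative with `vᵀ Pᵏ ≥ (c + s)ᵏ vᵀ`, so
`‖Pᵏ‖_∞ ≥ (c + s)ᵏ` and Gelfand's formula gives an eigenvalue `z` of `P` with `|z| ≥ c + s`.
If every eigenvalue `y = z - c` of `G` had `Re y ≤ 0`, then
`|y + c|² ≤ ‖G‖² + c² < (c + s)²` once `2cs > ‖G‖²`, a contradiction; hence `μ(G) > 0`.
-/

namespace SISMobility

section Spectral

variable {ι : Type*} [Fintype ι]

attribute [local instance] Matrix.linftyOpSeminormedAddCommGroup Matrix.linftyOpNormedRing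
  Matrix.linftyOpNormedAlgebra

lemma sum_norm_row_le_linfty_opNorm {κ α : Type*} [Fintype κ] [SeminormedAddCommGroup α]
    (A : Matrix ι κ α) (i : ι) : ∑ j, ‖A i j‖ ≤ ‖A‖ := by
  rw [linfty_opNorm_def]
  calc ∑ j, ‖A i j‖ = ((∑ j, ‖A i j‖₊ : NNReal) : ℝ) := by push_cast; rfl
    _ ≤ _ := NNReal.coe_le_coe.mpr
      (Finset.le_sup (f := fun i => ∑ j, ‖A i j‖₊) (Finset.mem_univ i))

lemma norm_apply_le_linfty_opNorm {κ α : Type*} [Fintype κ] [SeminormedAddCommGroup α]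
    (A : Matrix ι κ α) (i : ι) (j : κ) : ‖A i j‖ ≤ ‖A‖ :=
  (Finset.single_le_sum (fun j _ => norm_nonneg (A i j)) (Finset.mem_univ j)).trans
    (sum_norm_row_le_linfty_opNorm A i)

lemma le_linfty_opNorm_map_of_le_vecMul [Nonempty ι] {M : Matrix ι ι ℝ} {w : ι → ℝ}
    (hw : ∀ i, 0 < w i) {r : ℝ} (hr : ∀ j, r * w j ≤ (w ᵥ* M) j) :
    r ≤ ‖M.map (algebraMap ℝ ℂ)‖ := by
  have hrow (i : ι) : ∑ j, M i j ≤ ‖M.map (algebraMap ℝ ℂ)‖ :=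
    (Finset.sum_le_sum fun j _ => by simpa using le_abs_self (M i j)).trans
      (sum_norm_row_le_linfty_opNorm _ i)
  have hw₀ : 0 < ∑ i, w i := Finset.sum_pos (fun i _ => hw i) Finset.univ_nonempty
  refine le_of_mul_le_mul_right ?_ hw₀
  calc r * ∑ i, w i = ∑ j, r * w j := Finset.mul_sum _ _ _
    _ ≤ ∑ j, ∑ i, w i * M i j := Finset.sum_le_sum fun j _ => hr j
    _ = ∑ i, w i * ∑ j, M i j := by rw [Finset.sum_comm]; simp_rw [Finset.mul_sum]
    _ ≤ ∑ i, w i * ‖M.map (algebraMap ℝ ℂ)‖ :=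
      Finset.sum_le_sum fun i _ => mul_le_mul_of_nonneg_left (hrow i) (hw i).le
    _ = ‖M.map (algebraMap ℝ ℂ)‖ * ∑ i, w i := by rw [← Finset.sum_mul, mul_comm]

variable [DecidableEq ι]

lemma pow_mul_le_vecMul_pow {P : Matrix ι ι ℝ} (hP : ∀ i j, 0 ≤ P i j) {w : ι → ℝ} {r : ℝ}
    (hr₀ : 0 ≤ r) (hr : ∀ j, r * w j ≤ (w ᵥ* P) j) (k : ℕ) :
    ∀ j, r ^ k * w j ≤ (w ᵥ* P ^ k) j := by
  induction k with
  | zero => simp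
  | succ k ih =>
    intro j
    rw [pow_succ r, pow_succ P, ← vecMul_vecMul, mul_assoc]
    calc r ^ k * (r * w j) ≤ r ^ k * (w ᵥ* P) j := by gcongr; exact hr j
      _ = ((r ^ k • w) ᵥ* P) j := by rw [smul_vecMul]; rfl
      _ ≤ ((w ᵥ* P ^ k) ᵥ* P) j :=
        Finset.sum_le_sum fun i _ => mul_le_mul_of_nonneg_right (ih i) (hP i j)

lemma ofReal_le_spectralRadius_of_le_vecMul [Nonempty ι] {P : Matrix ι ι ℝ}
    (hP : ∀ i j, 0 ≤ P i j) {w : ι → ℝ} (hw : ∀ i, 0 < w i) {r : ℝ} (hr₀ : 0 ≤ r)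
    (hr : ∀ j, r * w j ≤ (w ᵥ* P) j) :
    ENNReal.ofReal r ≤ spectralRadius ℂ (P.map (algebraMap ℝ ℂ)) := by
  refine ge_of_tendsto (spectrum.pow_norm_pow_one_div_tendsto_nhds_spectralRadius _) ?_
  filter_upwards [eventually_ne_atTop 0] with k hk
  rw [ENNReal.ofReal_le_ofReal_iff (by positivity), ← Matrix.map_pow, one_div]
  calc r = (r ^ k) ^ (k⁻¹ : ℝ) := (Real.pow_rpow_inv_natCast hr₀ hk).symm
    _ ≤ _ := by
      gcongr
      exact le_linfty_opNorm_map_of_le_vecMul hw (pow_mul_le_vecMul_pow hP hr₀ hr k)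

lemma exists_mem_spectrum_le_norm_of_le_vecMul [Nonempty ι] {P : Matrix ι ι ℝ}
    (hP : ∀ i j, 0 ≤ P i j) {w : ι → ℝ} (hw : ∀ i, 0 < w i) {r : ℝ} (hr₀ : 0 ≤ r)
    (hr : ∀ j, r * w j ≤ (w ᵥ* P) j) :
    ∃ z ∈ spectrum ℂ (P.map (algebraMap ℝ ℂ)), r ≤ ‖z‖ := by
  obtain ⟨z, hz, hzρ⟩ := spectrum.exists_nnnorm_eq_spectralRadius (P.map (algebraMap ℝ ℂ))
  refine ⟨z, hz, ?_⟩
  have hρ := ofReal_le_spectralRadius_of_le_vecMul hP hw hr₀ hr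
  rwa [← hzρ, ← enorm_eq_nnnorm, ← ofReal_norm,
    ENNReal.ofReal_le_ofReal_iff (norm_nonneg z)] at hρ

lemma re_le_muMax {G : Matrix ι ι ℝ} {z : ℂ} (hz : z ∈ spectrum ℂ (G.map (algebraMap ℝ ℂ))) :
    z.re ≤ muMax G :=
  le_csSup ((spectrum.isCompact _).image Complex.continuous_re).bddAbove ⟨z, hz, rfl⟩

end Spectral

lemma norm_add_ofReal_lt {y : ℂ} {R c s : ℝ} (hy : ‖y‖ ≤ R) (hre : y.re ≤ 0) (hc : 0 ≤ c)
    (hs : 0 ≤ s) (hcs : R ^ 2 < 2 * c * s + s ^ 2) : ‖y + c‖ < c + s := by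
  have hsq : ‖y + c‖ ^ 2 = ‖y‖ ^ 2 + 2 * c * y.re + c ^ 2 := by
    simp only [Complex.sq_norm, Complex.normSq_apply, Complex.add_re, Complex.add_im,
      Complex.ofReal_re, Complex.ofReal_im, add_zero]
    ring
  have hy2 : ‖y‖ ^ 2 ≤ R ^ 2 := pow_le_pow_left₀ (norm_nonneg y) hy 2
  refine lt_of_pow_lt_pow_left₀ 2 (by positivity) ?_
  nlinarith [mul_nonpos_of_nonneg_of_nonpos hc hre]

section Metzler

variable {ι : Type*} [Fintype ι] [DecidableEq ι]

def IsMetzler (G : Matrix ι ι ℝ) : Prop :=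
  ∀ i j, i ≠ j → 0 ≤ G i j

lemma map_add_smul_one (G : Matrix ι ι ℝ) (c : ℝ) :
    (G + c • 1).map (algebraMap ℝ ℂ) = G.map (algebraMap ℝ ℂ) + algebraMap ℂ _ (c : ℂ) := by
  ext i j
  rcases eq_or_ne i j with rfl | hij <;> simp [algebraMap_eq_diagonal, one_apply, *]

attribute [local instance] Matrix.linftyOpNormedRing Matrix.linftyOpNormedAlgebra in
theorem IsMetzler.exists_mem_spectrum_re_pos [Nonempty ι] {G : Matrix ι ι ℝ} (hG : IsMetzler G)
    {w : ι → ℝ} (hw : ∀ i, 0 < w i) {s : ℝ} (hs : 0 < s) (hGw : ∀ j, s * w j ≤ (w ᵥ* G) j) :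
    ∃ z ∈ spectrum ℂ (G.map (algebraMap ℝ ℂ)), 0 < z.re := by
  by_contra! hre
  set R := ‖G.map (algebraMap ℝ ℂ)‖
  -- `c ≥ R` makes `G + c • 1` nonnegative, `c ≥ R² / s` makes `2 c s > R²`
  set c := R + R ^ 2 / s
  have hcR : R ≤ c := le_add_of_nonneg_right (by positivity)
  have hP : ∀ i j, 0 ≤ (G + c • 1) i j := by
    intro i j
    rcases eq_or_ne i j with rfl | hij
    · have hGi : |G i i| ≤ R := by
        have := norm_apply_le_linfty_opNorm (G.map (algebraMap ℝ ℂ)) i i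
        rwa [map_apply, norm_algebraMap', Real.norm_eq_abs] at this
      simp only [Matrix.add_apply, Matrix.smul_apply, one_apply_eq, smul_eq_mul, mul_one]
      linarith [neg_abs_le (G i i)]
    · simpa [one_apply_ne hij] using hG i j hij
  have hPw : ∀ j, (c + s) * w j ≤ (w ᵥ* (G + c • 1)) j := by
    intro j
    rw [vecMul_add, vecMul_smul, vecMul_one, Pi.add_apply, Pi.smul_apply, smul_eq_mul]
    linarith [hGw j]
  obtain ⟨z, hz, hzc⟩ :=
    exists_mem_spectrum_le_norm_of_le_vecMul hP hw (by positivity) hPw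
  rw [map_add_smul_one, ← spectrum.add_singleton_eq] at hz
  obtain ⟨y, hy, _, rfl, rfl⟩ := hz
  have hcs : R ^ 2 < 2 * c * s + s ^ 2 := by
    have hc : 2 * c * s = 2 * R * s + 2 * R ^ 2 := by
      simp only [c]; field_simp
    nlinarith [mul_nonneg (norm_nonneg (G.map (algebraMap ℝ ℂ))) hs.le]
  have := norm_add_ofReal_lt (spectrum.norm_le_norm_of_mem hy) (hre y hy) (by positivity)
    hs.le hcs
  exact this.not_ge hzc

end Metzler

section Model

variable {n m : ℕ}

lemma Bmat_mul_Fmat_apply (β : Fin n → ℝ) (x : Idx n m → ℝ) (k l : Idx n m) :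
    (Bmat n m β * Fmat x) k l = β k.2 * Fmat x k l :=
  diagonal_mul _ _ _ _

lemma Fmat_nonneg {x : Idx n m → ℝ} (hx : ∀ k, 0 ≤ x k) (k l : Idx n m) : 0 ≤ Fmat x k l := by
  unfold Fmat
  split_ifs
  · exact div_nonneg (hx _) (Finset.sum_nonneg fun η _ => hx _)
  · exact le_rfl

lemma Lmat_nonpos_of_ne {Q : Fin m → Matrix (Fin n) (Fin n) ℝ}
    (hQ : ∀ α i j, i ≠ j → 0 ≤ Q α i j) {x : Idx n m → ℝ} (hx : ∀ k, 0 ≤ x k)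
    {k l : Idx n m} (hkl : k ≠ l) : Lmat Q x k l ≤ 0 := by
  unfold Lmat
  split_ifs with h₁ h₂
  · exact absurd (Prod.ext h₁ h₂) hkl
  · exact neg_nonpos.mpr (div_nonneg (mul_nonneg (hQ _ _ _ (Ne.symm h₂)) (hx _)) (hx k))
  · exact le_rfl

lemma isMetzler_Bmat_mul_Fmat_sub_Dmat_sub_Lmat {β : Fin n → ℝ} (hβ : ∀ i, 0 ≤ β i)
    (δ : Fin n → ℝ) {Q : Fin m → Matrix (Fin n) (Fin n) ℝ} (hQ : ∀ α i j, i ≠ j → 0 ≤ Q α i j)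
    {x : Idx n m → ℝ} (hx : ∀ k, 0 ≤ x k) :
    IsMetzler (Bmat n m β * Fmat x - Dmat n m δ - Lmat Q x) := by
  intro k l hkl
  rw [Matrix.sub_apply, Matrix.sub_apply, Bmat_mul_Fmat_apply, Dmat, diagonal_apply_ne _ hkl]
  linarith [mul_nonneg (hβ k.2) (Fmat_nonneg hx k l), Lmat_nonpos_of_ne hQ hx hkl]

lemma vecMul_Lmat_self {Q : Fin m → Matrix (Fin n) (Fin n) ℝ} (hQ : ∀ α i, ∑ j, Q α i j = 0)
    {x : Idx n m → ℝ} (hx : ∀ k, x k ≠ 0) : x ᵥ* Lmat Q x = xRHS Q x := by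
  ext ⟨α, i⟩
  have hblock : (x ᵥ* Lmat Q x) (α, i) = ∑ j, x (α, j) * Lmat Q x (α, j) (α, i) := by
    simp only [vecMul, dotProduct, Fintype.sum_prod_type]
    refine Finset.sum_eq_single α (fun γ _ hγ => ?_) (by simp)
    simp [Lmat, hγ]
  have hdiag : x (α, i) * Lmat Q x (α, i) (α, i) = ∑ j ∈ univ.erase i, Q α j i * x (α, j) := by
    simp only [Lmat, if_true, filter_ne', Finset.mul_sum]
    refine Finset.sum_congr rfl fun j _ => ?_
    field_simp [hx (α, i)]
  have hoff : ∀ j ∈ univ.erase i, x (α, j) * Lmat Q x (α, j) (α, i) = -(Q α i j * x (α, i)) := by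
    intro j hj
    simp only [Lmat, if_true, if_neg (Finset.ne_of_mem_erase hj)]
    field_simp [hx (α, j)]
  have hrow : ∑ j ∈ univ.erase i, Q α i j = -Q α i i := by
    rw [Finset.sum_erase_eq_sub (mem_univ i), hQ]; ring
  rw [hblock, ← Finset.add_sum_erase _ _ (mem_univ i), hdiag, Finset.sum_congr rfl hoff,
    Finset.sum_neg_distrib, ← Finset.sum_mul, hrow, xRHS, ← Finset.add_sum_erase _ _ (mem_univ i)]
  ring

lemma vecMul_Bmat_mul_Fmat (β : Fin n → ℝ) {x : Idx n m → ℝ} (hx : ∀ i, ∑ η, x (η, i) ≠ 0) :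
    x ᵥ* (Bmat n m β * Fmat x) = fun l => β l.2 * x l := by
  ext ⟨γ, i⟩
  calc (x ᵥ* (Bmat n m β * Fmat x)) (γ, i)
      = ∑ α, x (α, i) * (β i * (x (γ, i) / ∑ η, x (η, i))) := by
        simp only [vecMul, dotProduct, Bmat_mul_Fmat_apply, Fintype.sum_prod_type]
        refine Finset.sum_congr rfl fun α _ => ?_
        refine (Finset.sum_eq_single i (fun j _ hj => ?_) (by simp)).trans ?_
        · simp [Fmat, Ne.symm hj]
        · simp [Fmat]
    _ = β i * x (γ, i) := by
        rw [← Finset.sum_mul]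
        field_simp [hx i]

lemma vecMul_eq_of_xRHS_eq_zero [NeZero m] (β δ : Fin n → ℝ)
    {Q : Fin m → Matrix (Fin n) (Fin n) ℝ} (hQ : ∀ α i, ∑ j, Q α i j = 0) {x : Idx n m → ℝ}
    (hx : ∀ k, 0 < x k) (hstat : xRHS Q x = 0) :
    x ᵥ* (Bmat n m β * Fmat x - Dmat n m δ - Lmat Q x) = fun l => (β l.2 - δ l.2) * x l := by
  have hS (i : Fin n) : ∑ η, x (η, i) ≠ 0 :=
    (Finset.sum_pos (fun η _ => hx (η, i)) univ_nonempty).ne'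
  ext l
  rw [vecMul_sub, vecMul_sub, vecMul_Bmat_mul_Fmat β hS, vecMul_Lmat_self hQ fun k => (hx k).ne',
    hstat, Pi.sub_apply, Pi.sub_apply, Dmat, vecMul_diagonal, Pi.zero_apply]
  ring

end Model

end SISMobility

theorem necessary_condition_some_patch_general
    (n m : ℕ) (hn : 2 ≤ n) (hm : 1 ≤ m)
    (Q : Fin m → Matrix (Fin n) (Fin n) ℝ)
    (hQgen : ∀ α, IsGenerator (Q α))
    (β δ : Fin n → ℝ) (hβ : ∀ i, 0 < β i)
    (vα : Fin m → Fin n → ℝ) (hvαpos : ∀ α i, 0 < vα α i)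
    (hvαeig : ∀ α i, ∑ j, Q α j i * vα α j = 0)
    (Npop : Fin m → ℝ) (hNpop : ∀ α, 0 < Npop α)
    (v : Idx n m → ℝ) (hv : ∀ k, v k = Npop k.1 * vα k.1 k.2)
    (hmu : muMax (Bmat n m β * Fmat v - Dmat n m δ - Lmat Q v) ≤ 0) :
    ∃ i : Fin n, β i ≤ δ i := by
  have : NeZero n := ⟨by omega⟩
  have : NeZero m := ⟨by omega⟩
  by_contra! hδβ
  have hvpos (k : Idx n m) : 0 < v k := hv k ▸ mul_pos (hNpop _) (hvαpos _ _)
  have hstat : xRHS Q v = 0 := by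
    ext k
    simp only [xRHS, hv, Pi.zero_apply, mul_left_comm _ (Npop k.1), ← Finset.mul_sum,
      hvαeig, mul_zero]
  set s := univ.inf' univ_nonempty fun i => β i - δ i
  have hs : 0 < s := (lt_inf'_iff _).mpr fun i _ => sub_pos.mpr (hδβ i)
  have hGv (l : Idx n m) :
      s * v l ≤ (v ᵥ* (Bmat n m β * Fmat v - Dmat n m δ - Lmat Q v)) l := by
    rw [vecMul_eq_of_xRHS_eq_zero β δ (fun α => (hQgen α).2) hvpos hstat]
    exact mul_le_mul_of_nonneg_right (inf'_le _ (mem_univ l.2)) (hvpos l).le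
  obtain ⟨z, hz, hzre⟩ := (isMetzler_Bmat_mul_Fmat_sub_Dmat_sub_Lmat (fun i => (hβ i).le) δ
    (fun α => (hQgen α).1) fun k => (hvpos k).le).exists_mem_spectrum_re_pos hvpos hs hGv
  exact (hzre.trans_le (re_le_muMax hz)).not_ge hmu

/-- Corollary 1 (ii): if `μ(B F* − D − L*) ≤ 0`, then there exists
some patch `i` with `δ_i ≥ β_i`. -/
theorem necessary_condition_some_patch
    (n m : ℕ) (hn : 2 ≤ n) (hm : 1 ≤ m)
    (Q : Fin m → Matrix (Fin n) (Fin n) ℝ)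
    (hQgen : ∀ α, IsGenerator (Q α)) (hQirr : ∀ α, StronglyConnected (Q α))
    (β δ : Fin n → ℝ) (hβ : ∀ i, 0 < β i) (hδ : ∀ i, 0 ≤ δ i)
    (vα : Fin m → Fin n → ℝ) (hvαpos : ∀ α i, 0 < vα α i)
    (hvαnorm : ∀ α, ∑ i, vα α i = 1)
    (hvαeig : ∀ α i, ∑ j, Q α j i * vα α j = 0)
    (Npop : Fin m → ℝ) (hNpop : ∀ α, 0 < Npop α)
    (v : Idx n m → ℝ) (hv : ∀ k, v k = Npop k.1 * vα k.1 k.2)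
    (hmu : muMax (Bmat n m β * Fmat v - Dmat n m δ - Lmat Q v) ≤ 0) :
    ∃ i : Fin n, β i ≤ δ i :=
  necessary_condition_some_patch_general n m hn hm Q hQgen β δ hβ vα hvαpos hvαeig Npop hNpop v hv
    hmu
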